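/- Let n ≥ 1, let Ω ⊆ ℂⁿ be a bounded open set, let α satisfy (n−1)/n < α ≤ 1, and let Φ : Ω → ℂⁿ be holomorphic with ‖Φ(z) − Φ(ζ)‖ ≤ C₀·‖z − ζ‖^α for all z, ζ ∈ Ω. Set ε' = n·α − n + 1, so ε' ∈ (0,1]. Then there is a constant C (depending only on n, α, C₀) such that the complex Jacobian determinant u(z) = det(fderiv ℂ Φ z) satisfies |u(z)| ≤ C · d(z)^{ε' − 1} for all z ∈ Ω, where d(z) = infDist(z, Ωᶜ). In particular, |u(z)|·d(z)^{1−ε'} is bounded on Ω. -/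

import Mathlib

open Set Metric
open scoped Nat

/-! Cauchy's estimate on the ball `B(z, d(z))`, on which a Hölder map of order `α` has oscillation
at most `C₀ d(z)^α`, gives `‖DΦ(z)‖ ≤ C₀ d(z)^(α-1)`. Expanding the determinant of an `n × n`
matrix whose entries are bounded by `‖DΦ(z)‖` then yields
`|u(z)| ≤ n! C₀ⁿ d(z)^(n(α-1)) = n! C₀ⁿ d(z)^(ε'-1)`. -/

theorem ContinuousLinearMap.norm_det_le_factorial_mul_opNorm_pow {𝕜 E : Type*} [RCLike 𝕜]
    [NormedAddCommGroup E] [InnerProductSpace 𝕜 E] [FiniteDimensional 𝕜 E] (A : E →L[𝕜] E) :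
    ‖A.det‖ ≤ (Module.finrank 𝕜 E)! * ‖A‖ ^ Module.finrank 𝕜 E := by
  let b := stdOrthonormalBasis 𝕜 E
  have hentry : ∀ i j, NormedField.toAbsoluteValue 𝕜
      (LinearMap.toMatrix b.toBasis b.toBasis (A : E →ₗ[𝕜] E) i j) ≤ ‖A‖ := by
    intro i j
    change ‖_‖ ≤ _
    rw [LinearMap.toMatrix_apply, OrthonormalBasis.coe_toBasis_repr_apply,
      OrthonormalBasis.coe_toBasis]
    calc _ ≤ ‖A (b j)‖ := (PiLp.norm_apply_le _ i).trans_eq (b.repr.norm_map _)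
      _ ≤ ‖A‖ * ‖b j‖ := A.le_opNorm _
      _ = ‖A‖ := by rw [b.norm_eq_one, mul_one]
  calc ‖A.det‖
      = NormedField.toAbsoluteValue 𝕜 (LinearMap.toMatrix b.toBasis b.toBasis A).det := by
        rw [LinearMap.det_toMatrix]; rfl
    _ ≤ _ := by simpa using Matrix.det_le hentry

theorem Bornology.IsBounded.infDist_compl_pos {E : Type*} [NormedAddCommGroup E]
    [NormedSpace ℝ E] [Nontrivial E] {Ω : Set E} (hb : Bornology.IsBounded Ω) (hΩ : IsOpen Ω)
    {z : E} (hz : z ∈ Ω) : 0 < infDist z Ωᶜ := by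
  have hne : Ωᶜ.Nonempty := nonempty_compl.2 fun h => NormedSpace.unbounded_univ ℝ E (h ▸ hb)
  exact (hΩ.isClosed_compl.notMem_iff_infDist_pos hne).1 (not_not_intro hz)

section Holder

variable {E F : Type*} [NormedAddCommGroup E] [NormedSpace ℂ E] [NormedAddCommGroup F]
  [NormedSpace ℂ F] {f : E → F} {z : E} {C α : ℝ}

theorem norm_fderiv_le_rpow_of_holder_ball {r : ℝ} (hr : 0 < r) (hC : 0 ≤ C) (hα : 0 ≤ α)
    (hf : DifferentiableOn ℂ f (ball z r)) (hH : ∀ w ∈ ball z r, ‖f w - f z‖ ≤ C * ‖w - z‖ ^ α) :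
    ‖fderiv ℂ f z‖ ≤ C * r ^ (α - 1) := by
  have hmaps : MapsTo f (ball z r) (closedBall (f z) (C * r ^ α)) := fun w hw => by
    rw [mem_closedBall, dist_eq_norm]
    refine (hH w hw).trans (mul_le_mul_of_nonneg_left ?_ hC)
    exact Real.rpow_le_rpow (norm_nonneg _) (mem_ball_iff_norm.1 hw).le hα
  calc ‖fderiv ℂ f z‖ ≤ C * r ^ α / r := Complex.norm_fderiv_le_div_of_mapsTo_ball hf hmaps hr
    _ = C * r ^ (α - 1) := by rw [Real.rpow_sub_one hr.ne', mul_div_assoc]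

theorem norm_fderiv_le_infDist_compl_rpow_of_holder {Ω : Set E} (hC : 0 ≤ C) (hα : 0 ≤ α)
    (hf : DifferentiableOn ℂ f Ω) (hH : ∀ z ∈ Ω, ∀ ζ ∈ Ω, ‖f z - f ζ‖ ≤ C * ‖z - ζ‖ ^ α)
    (hd : 0 < infDist z Ωᶜ) :
    ‖fderiv ℂ f z‖ ≤ C * infDist z Ωᶜ ^ (α - 1) :=
  norm_fderiv_le_rpow_of_holder_ball hd hC hα (hf.mono ball_infDist_compl_subset) fun w hw =>
    hH w (ball_infDist_compl_subset hw) z (ball_infDist_compl_subset (mem_ball_self hd))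

end Holder

theorem jacobian_det_bound_of_lipschitz_general (n : ℕ) (hn : 1 ≤ n)
    (α : ℝ) (hα : ((n : ℝ) - 1) / n < α) (C₀ : ℝ) (hC₀ : 0 ≤ C₀)
    (ε' : ℝ) (hε' : ε' = n * α - n + 1) :
    ∃ C : ℝ, ∀ Ω : Set (EuclideanSpace ℂ (Fin n)), IsOpen Ω → Bornology.IsBounded Ω →
      ∀ Φ : EuclideanSpace ℂ (Fin n) → EuclideanSpace ℂ (Fin n), DifferentiableOn ℂ Φ Ω →
      (∀ z ∈ Ω, ∀ ζ ∈ Ω, ‖Φ z - Φ ζ‖ ≤ C₀ * ‖z - ζ‖ ^ α) →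
      ∀ z ∈ Ω, ‖(fderiv ℂ Φ z).det‖ ≤ C * infDist z Ωᶜ ^ (ε' - 1) := by
  have : Nonempty (Fin n) := ⟨⟨0, hn⟩⟩
  have hα₀ : 0 ≤ α := (div_nonneg (by simpa using hn) n.cast_nonneg).trans hα.le
  refine ⟨n ! * C₀ ^ n, fun Ω hΩ hb Φ hΦ hH z hz => ?_⟩
  set d := infDist z Ωᶜ
  have hd : 0 < d := hb.infDist_compl_pos hΩ hz
  have hD := norm_fderiv_le_infDist_compl_rpow_of_holder hC₀ hα₀ hΦ hH hd
  calc ‖(fderiv ℂ Φ z).det‖ ≤ n ! * ‖fderiv ℂ Φ z‖ ^ n := by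
        simpa using (fderiv ℂ Φ z).norm_det_le_factorial_mul_opNorm_pow
    _ ≤ n ! * (C₀ * d ^ (α - 1)) ^ n := by gcongr
    _ = n ! * C₀ ^ n * d ^ (ε' - 1) := by
        rw [mul_pow, ← Real.rpow_mul_natCast hd.le, hε']
        ring_nf

/-- **Krantz, estimate on the Jacobian determinant.**  If `Φ` is holomorphic on a bounded open
set `Ω ⊆ ℂⁿ` and Lipschitz of order `α` with `(n−1)/n < α ≤ 1`, then with `ε' = nα − n + 1`
the complex Jacobian determinant `u = det (fderiv ℂ Φ)` satisfies
`|u(z)| ≤ C d(z)^{ε'−1}` on `Ω`; in particular `|u(z)| d(z)^{1−ε'}` is bounded on `Ω`. -/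
theorem jacobian_det_bound_of_lipschitz (n : ℕ) (hn : 1 ≤ n)
    (α : ℝ) (hα : ((n : ℝ) - 1) / n < α) (hα1 : α ≤ 1) (C₀ : ℝ) (hC₀ : 0 ≤ C₀)
    (ε' : ℝ) (hε' : ε' = n * α - n + 1) :
    ∃ C : ℝ, ∀ Ω : Set (EuclideanSpace ℂ (Fin n)), IsOpen Ω → Bornology.IsBounded Ω →
      ∀ Φ : EuclideanSpace ℂ (Fin n) → EuclideanSpace ℂ (Fin n), DifferentiableOn ℂ Φ Ω →
      (∀ z ∈ Ω, ∀ ζ ∈ Ω, ‖Φ z - Φ ζ‖ ≤ C₀ * ‖z - ζ‖ ^ α) →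
      ∀ z ∈ Ω, ‖(fderiv ℂ Φ z).det‖ ≤ C * infDist z Ωᶜ ^ (ε' - 1) :=
  jacobian_det_bound_of_lipschitz_general n hn α hα C₀ hC₀ ε' hε'
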